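/- arXiv:1504.03885 — 5 statements merged into one kernel-verified Lean document; each statement's English description precedes it below -/
import Mathlib

section
/- Let M be a bounded non-negative self-adjoint operator in a Hilbert space G and B a self-adjoint operator in G, bounded from above, with ran M^{1/2} ⊂ dom B. If ‖B₊ M‖ < 1, where B₊ is the positive part of B, then 1 ∈ ρ(M^{1/2} B M^{1/2}), i.e. I − M^{1/2} B M^{1/2} is boundedly invertible. -/
open scoped InnerProductSpace ENNReal

/-!
With `R = M^{1/2}`, the operator `A = R B₊ R` is self-adjoint, so its norm is its spectral
radius; as `ab` and `ba` share their non-zero spectrum,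
`‖A‖ = r(R (B₊ R)) = r(B₊ R R) = r(B₊ M) ≤ ‖B₊ M‖ < 1`. Because `B₋ ≥ 0`, the numerical range of
`R B R = A - R B₋ R` lies in `(-∞, ‖A‖]`, so `I - R B R` is coercive and therefore invertible.
-/

theorem spectralRadius_mul_comm {𝕜 A : Type*} [NormedField 𝕜] [Ring A] [Algebra 𝕜 A]
    (a b : A) : spectralRadius 𝕜 (a * b) = spectralRadius 𝕜 (b * a) := by
  suffices h : ∀ a b : A, spectralRadius 𝕜 (a * b) ≤ spectralRadius 𝕜 (b * a) from
    le_antisymm (h a b) (h b a)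
  intro a b
  refine iSup₂_le fun k hk => ?_
  rcases eq_or_ne k 0 with rfl | hk0
  · simp
  · have hk' : k ∈ spectrum 𝕜 (b * a) \ {0} := spectrum.nonzero_mul_comm (𝕜 := 𝕜) a b ▸ ⟨hk, hk0⟩
    exact le_iSup₂ (f := fun k (_ : k ∈ spectrum 𝕜 (b * a)) => (‖k‖₊ : ℝ≥0∞)) k hk'.1

theorem IsSelfAdjoint.norm_mul_mul_self_le {A : Type*} [CStarAlgebra A] {p r : A}
    (hp : IsSelfAdjoint p) (hr : IsSelfAdjoint r) : ‖r * p * r‖ ≤ ‖p * (r * r)‖ := by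
  nontriviality A
  suffices h : (‖r * p * r‖₊ : ℝ≥0∞) ≤ ‖p * (r * r)‖₊ by exact_mod_cast h
  calc (‖r * p * r‖₊ : ℝ≥0∞)
      = spectralRadius ℂ (r * (p * r)) := by
        rw [← mul_assoc, (hp.conjugate_self hr).spectralRadius_eq_nnnorm]
    _ = spectralRadius ℂ (p * (r * r)) := by rw [spectralRadius_mul_comm, mul_assoc]
    _ ≤ ‖p * (r * r)‖₊ := spectrum.spectralRadius_le_nnnorm _

namespace ContinuousLinearMap

variable {𝕜 E : Type*} [RCLike 𝕜] [NormedAddCommGroup E] [InnerProductSpace 𝕜 E]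

theorem re_inner_self_apply_le (A : E →L[𝕜] E) (x : E) :
    RCLike.re ⟪A x, x⟫_𝕜 ≤ ‖A‖ * ‖x‖ ^ 2 :=
  calc RCLike.re ⟪A x, x⟫_𝕜 ≤ ‖A x‖ * ‖x‖ := re_inner_le_norm _ _
    _ ≤ ‖A‖ * ‖x‖ * ‖x‖ := by gcongr; exact A.le_opNorm x
    _ = ‖A‖ * ‖x‖ ^ 2 := by ring

theorem one_notMem_spectrum_of_re_inner_le [CompleteSpace E] (T : E →L[𝕜] E) {β : ℝ}
    (hβ : β < 1) (hT : ∀ x, RCLike.re ⟪T x, x⟫_𝕜 ≤ β * ‖x‖ ^ 2) : (1 : 𝕜) ∉ spectrum 𝕜 T := by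
  rw [spectrum.notMem_iff, map_one]
  refine isUnit_of_forall_le_norm_inner_map _ (c := ⟨1 - β, by linarith⟩)
    (NNReal.coe_pos.mp (sub_pos.mpr hβ)) fun x => ?_
  calc ‖x‖ ^ 2 * (1 - β) ≤ ‖x‖ ^ 2 - RCLike.re ⟪T x, x⟫_𝕜 := by nlinarith [hT x]
    _ = RCLike.re ⟪(1 - T) x, x⟫_𝕜 := by
      rw [sub_apply, inner_sub_left, map_sub, one_apply_eq_self, inner_self_eq_norm_sq]
    _ ≤ ‖⟪(1 - T) x, x⟫_𝕜‖ := RCLike.re_le_norm _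

end ContinuousLinearMap

theorem stmt4_general
    {G : Type*} [NormedAddCommGroup G] [InnerProductSpace ℂ G] [CompleteSpace G]
    (M R : G →L[ℂ] G)
    (hR : IsSelfAdjoint R)
    (hRR : R ∘L R = M)
    (B : G →ₗ.[ℂ] G)
    -- B = B₊ − B₋ via the spectral measure: B₊ bounded non-negative, B₋ ≥ 0
    (Bp : G →L[ℂ] G) (hBp_sa : IsSelfAdjoint Bp)
    (Bm : G →ₗ.[ℂ] G) (hBm_dom : Bm.domain = B.domain)
    (hBm_nn : ∀ φ : Bm.domain, 0 ≤ (⟪Bm φ, (φ : G)⟫_ℂ).re)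
    (hdecomp : ∀ x : G, ∀ (hxB : x ∈ B.domain) (hxBm : x ∈ Bm.domain),
      B ⟨x, hxB⟩ = Bp x - Bm ⟨x, hxBm⟩)
    -- ran M^{1/2} ⊆ dom B
    (hranR : ∀ x : G, R x ∈ B.domain)
    -- BR is the bounded everywhere defined operator B M^{1/2}
    (BR : G →L[ℂ] G) (hBR : ∀ x : G, BR x = B ⟨R x, hranR x⟩)
    -- ‖B₊ M‖ < 1
    (hnorm : ‖Bp ∘L M‖ < 1) :
    (1 : ℂ) ∉ spectrum ℂ (R ∘L BR) := by
  have hRsymm := ContinuousLinearMap.isSelfAdjoint_iff_isSymmetric.mp hR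
  have hform : ∀ x, (⟪(R ∘L BR) x, x⟫_ℂ).re ≤ (⟪(R ∘L Bp ∘L R) x, x⟫_ℂ).re := by
    intro x
    have hRx : R x ∈ Bm.domain := hBm_dom ▸ hranR x
    have hBR_form : ⟪(R ∘L BR) x, x⟫_ℂ = ⟪BR x, R x⟫_ℂ := hRsymm _ x
    have hBp_form : ⟪(R ∘L Bp ∘L R) x, x⟫_ℂ = ⟪Bp (R x), R x⟫_ℂ := hRsymm _ x
    rw [hBR_form, hBp_form, hBR, hdecomp (R x) (hranR x) hRx, inner_sub_left, Complex.sub_re]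
    linarith [hBm_nn ⟨R x, hRx⟩]
  have hA : ‖R ∘L Bp ∘L R‖ ≤ ‖Bp ∘L M‖ := by
    rw [← hRR]
    exact hBp_sa.norm_mul_mul_self_le hR
  refine (R ∘L BR).one_notMem_spectrum_of_re_inner_le hnorm fun x => ?_
  calc (⟪(R ∘L BR) x, x⟫_ℂ).re ≤ (⟪(R ∘L Bp ∘L R) x, x⟫_ℂ).re := hform x
    _ ≤ ‖R ∘L Bp ∘L R‖ * ‖x‖ ^ 2 := (R ∘L Bp ∘L R).re_inner_self_apply_le x
    _ ≤ ‖Bp ∘L M‖ * ‖x‖ ^ 2 := by gcongr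

/-- Let `M ≥ 0` be bounded self-adjoint with non-negative square root
`R = M^{1/2}`, and let `B = B₊ − B₋` be self-adjoint, bounded from above (so that the
positive part `B₊` is bounded), with `ran M^{1/2} ⊆ dom B`.  If `‖B₊ M‖ < 1` then
`1 ∈ ρ(M^{1/2} B M^{1/2})`. -/
theorem stmt4
    {G : Type*} [NormedAddCommGroup G] [InnerProductSpace ℂ G] [CompleteSpace G]
    (M R : G →L[ℂ] G)
    (hM : IsSelfAdjoint M) (hMnn : ∀ x : G, 0 ≤ (⟪M x, x⟫_ℂ).re)
    (hR : IsSelfAdjoint R) (hRnn : ∀ x : G, 0 ≤ (⟪R x, x⟫_ℂ).re)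
    (hRR : R ∘L R = M)
    -- B self-adjoint, bounded from above
    (B : G →ₗ.[ℂ] G) (hBsa : IsSelfAdjoint B)
    (hBub : ∃ c : ℝ, ∀ φ : B.domain, (⟪B φ, (φ : G)⟫_ℂ).re ≤ c * ‖(φ : G)‖ ^ 2)
    -- B = B₊ − B₋ via the spectral measure: B₊ bounded non-negative, B₋ ≥ 0
    (Bp : G →L[ℂ] G) (hBp_sa : IsSelfAdjoint Bp) (hBp_nn : ∀ x : G, 0 ≤ (⟪Bp x, x⟫_ℂ).re)
    (Bm : G →ₗ.[ℂ] G) (hBm_dom : Bm.domain = B.domain)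
    (hBm_nn : ∀ φ : Bm.domain, 0 ≤ (⟪Bm φ, (φ : G)⟫_ℂ).re)
    (hdecomp : ∀ x : G, ∀ (hxB : x ∈ B.domain) (hxBm : x ∈ Bm.domain),
      B ⟨x, hxB⟩ = Bp x - Bm ⟨x, hxBm⟩)
    -- ran M^{1/2} ⊆ dom B
    (hranR : ∀ x : G, R x ∈ B.domain)
    -- BR is the bounded everywhere defined operator B M^{1/2}
    (BR : G →L[ℂ] G) (hBR : ∀ x : G, BR x = B ⟨R x, hranR x⟩)
    -- ‖B₊ M‖ < 1
    (hnorm : ‖Bp ∘L M‖ < 1) :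
    (1 : ℂ) ∉ spectrum ℂ (R ∘L BR) :=
  stmt4_general M R hR hRR B Bp hBp_sa Bm hBm_dom hBm_nn hdecomp hranR BR hBR hnorm
end

section
/- Let M be a bounded non-negative self-adjoint operator and B ≤ 0 a self-adjoint operator in a Hilbert space G with ran M^{1/2} ⊂ dom B. Then 1 ∈ ρ(BM) (where BM is the bounded everywhere defined closure of the product). -/
open scoped InnerProductSpace

/-! `R ∘ BR` is `M^{1/2} B M^{1/2}`, and by symmetry of `R` it is dissipative:
`re ⟪R (BR x), x⟫ = re ⟪B (R x), R x⟫ ≤ 0`. Hence `re ⟪(1 - R ∘ BR) x, x⟫ ≥ ‖x‖²`, so `1 - R ∘ BR`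
is invertible, and `σ(ab) \ {0} = σ(ba) \ {0}` transfers this to `BR ∘ R`. -/

namespace ContinuousLinearMap

variable {𝕜 E : Type*} [RCLike 𝕜] [NormedAddCommGroup E] [InnerProductSpace 𝕜 E]

open RCLike

theorem re_inner_comp_apply_self_nonpos {R S : E →L[𝕜] E} (hR : (R : E →ₗ[𝕜] E).IsSymmetric)
    (hS : ∀ x, re ⟪S x, R x⟫_𝕜 ≤ 0) (x : E) : re ⟪(R ∘L S) x, x⟫_𝕜 ≤ 0 := by
  rw [comp_apply, ← coe_coe, hR (S x) x]
  exact hS x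

theorem notMem_spectrum_of_re_inner_self_nonpos [CompleteSpace E] {T : E →L[𝕜] E}
    (hT : ∀ x, re ⟪T x, x⟫_𝕜 ≤ 0) {c : 𝕜} (hc : 0 < re c) : c ∉ spectrum 𝕜 T := by
  rw [spectrum.notMem_iff]
  refine isUnit_of_forall_le_norm_inner_map _ (c := ⟨re c, hc.le⟩) hc fun x => ?_
  calc ‖x‖ ^ 2 * re c ≤ re c * ‖x‖ ^ 2 - re ⟪T x, x⟫_𝕜 := by linarith [hT x, mul_comm (‖x‖ ^ 2) (re c)]
    _ = re ⟪(algebraMap 𝕜 (E →L[𝕜] E) c - T) x, x⟫_𝕜 := by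
      rw [sub_apply, inner_sub_left, map_sub, algebraMap_apply, inner_smul_left,
        inner_self_eq_norm_sq_to_K, ← ofReal_pow, re_mul_ofReal, conj_re]
    _ ≤ ‖⟪(algebraMap 𝕜 (E →L[𝕜] E) c - T) x, x⟫_𝕜‖ := re_le_norm _

end ContinuousLinearMap

theorem stmt5_general
    {G : Type*} [NormedAddCommGroup G] [InnerProductSpace ℂ G] [CompleteSpace G]
    (R : G →L[ℂ] G)
    (hR : IsSelfAdjoint R)
    (B : G →ₗ.[ℂ] G)
    (hBneg : ∀ φ : B.domain, (⟪B φ, (φ : G)⟫_ℂ).re ≤ 0)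
    (hranR : ∀ x : G, R x ∈ B.domain)
    (BR : G →L[ℂ] G) (hBR : ∀ x : G, BR x = B ⟨R x, hranR x⟩) :
    (1 : ℂ) ∉ spectrum ℂ (BR ∘L R) := by
  have hdiss : ∀ x, (⟪BR x, R x⟫_ℂ).re ≤ 0 := fun x => hBR x ▸ hBneg ⟨R x, hranR x⟩
  have hswap : (1 : ℂ) ∉ spectrum ℂ (R ∘L BR) :=
    ContinuousLinearMap.notMem_spectrum_of_re_inner_self_nonpos
      (ContinuousLinearMap.re_inner_comp_apply_self_nonpos hR.isSymmetric hdiss) (by simp)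
  simpa [← ContinuousLinearMap.mul_def] using
    (spectrum.unit_mem_mul_comm (r := (1 : ℂˣ)) (a := BR) (b := R)).not.mpr hswap

/-- Let `M ≥ 0` be bounded self-adjoint with non-negative square root
`R = M^{1/2}` and let `B ≤ 0` be self-adjoint with `ran M^{1/2} ⊆ dom B`.  Then
`1 ∈ ρ(BM)`, where `BM = (B M^{1/2}) M^{1/2}` is the bounded everywhere defined
closure of the product. -/
theorem stmt5
    {G : Type*} [NormedAddCommGroup G] [InnerProductSpace ℂ G] [CompleteSpace G]
    (M R : G →L[ℂ] G)
    (hM : IsSelfAdjoint M) (hMnn : ∀ x : G, 0 ≤ (⟪M x, x⟫_ℂ).re)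
    (hR : IsSelfAdjoint R) (hRnn : ∀ x : G, 0 ≤ (⟪R x, x⟫_ℂ).re)
    (hRR : R ∘L R = M)
    (B : G →ₗ.[ℂ] G) (hBsa : IsSelfAdjoint B)
    (hBneg : ∀ φ : B.domain, (⟪B φ, (φ : G)⟫_ℂ).re ≤ 0)
    (hranR : ∀ x : G, R x ∈ B.domain)
    (BR : G →L[ℂ] G) (hBR : ∀ x : G, BR x = B ⟨R x, hranR x⟩) :
    (1 : ℂ) ∉ spectrum ℂ (BR ∘L R) :=
  stmt5_general R hR B hBneg hranR BR hBR
end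

section
/- Let {G, Γ₀, Γ₁} be a quasi boundary triple for T ⊂ S* with γ-field γ and Weyl function M. Suppose A₀ is bounded from below, M(λ) is bounded for all λ ∈ ρ(A₀), ‖\overline{M(λ)}‖ → 0 as λ → −∞, and B is a self-adjoint operator in G bounded from above satisfying: ran \overline{M(λ)}^{1/2} ⊂ dom B and B(ran \overline{M(λ)}) ⊂ ran Γ₀ for all λ < min σ(A₀), ran Γ₁ ⊂ dom B, and B(ran Γ₁) ⊂ ran Γ₀. Then A_[B] = T↾{f : Γ₀f = BΓ₁f} is self-adjoint and bounded from below. -/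
/-!
`A_[B]` is symmetric by the Green identity and the symmetry of `B`. For `λ < σ₀` the problem
`(T - λ) f = h`, `Γ₀ f = B Γ₁ f` is solved by `f = f₀ + k`, where `f₀ = (A₀ - λ)⁻¹ h` and
`k ∈ ker (T - λ)` has boundary value `Γ₀ k = x` with `x - B M̄(λ) x = B Γ₁ f₀`; the conditions on
`B` put `x` in `ran Γ₀`. Writing `M̄(λ) = R²`, this equation reduces to inverting `1 - R B R`,
which is coercive as soon as `max c 0 · ‖M̄(λ)‖ < 1` (`c` an upper bound of `B`), i.e. for all
`λ ≤ λ₁`. A symmetric operator `S` with `S - λ` onto for a real `λ` is self-adjoint, with bounded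
self-adjoint resolvent `r = (S - λ₁)⁻¹`. For `m < 0` the resolvent at `λ₁ + m⁻¹` gives an inverse
of `m - r`, so the spectrum of `r` is non-negative, `r ≥ 0`, and this is `S ≥ λ₁`.
-/

open scoped InnerProductSpace

namespace LinearPMap

variable {E : Type*} [NormedAddCommGroup E] [InnerProductSpace ℂ E]

def subScalar (S : E →ₗ.[ℂ] E) (l : ℂ) : S.domain →ₗ[ℂ] E :=
  S.toFun - l • S.domain.subtype

@[simp]
lemma subScalar_apply (S : E →ₗ.[ℂ] E) (l : ℂ) (x : S.domain) :
    S.subScalar l x = S x - l • (x : E) :=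
  rfl

lemma re_inner_subScalar_self (S : E →ₗ.[ℂ] E) (l : ℝ) (x : S.domain) :
    (⟪S.subScalar l x, (x : E)⟫_ℂ).re = (⟪S x, (x : E)⟫_ℂ).re - l * ‖(x : E)‖ ^ 2 := by
  rw [subScalar_apply, inner_sub_left, inner_smul_left, Complex.conj_ofReal, Complex.sub_re,
    Complex.re_ofReal_mul, ← inner_self_eq_norm_sq (𝕜 := ℂ)]
  rfl

variable {S : E →ₗ.[ℂ] E}

lemma IsFormalAdjoint.inner_subScalar (hS : S.IsFormalAdjoint S) (l : ℝ) (x y : S.domain) :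
    ⟪S.subScalar l x, (y : E)⟫_ℂ = ⟪(x : E), S.subScalar l y⟫_ℂ := by
  rw [subScalar_apply, subScalar_apply, inner_sub_left, inner_sub_right, inner_smul_left,
    inner_smul_right, hS x y, Complex.conj_ofReal]

lemma eq_zero_of_forall_inner_subScalar_eq_zero {l : ℂ}
    (hsurj : Function.Surjective (S.subScalar l)) {v : E} (hv : ∀ g, ⟪v, S.subScalar l g⟫_ℂ = 0) : v = 0 := by
  obtain ⟨g, hg⟩ := hsurj v
  exact inner_self_eq_zero.mp (hg ▸ hv g)

section Complete

variable [CompleteSpace E]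

lemma _root_.IsSelfAdjoint.isFormalAdjoint (hS : IsSelfAdjoint S) : S.IsFormalAdjoint S := by
  have := adjoint_isFormalAdjoint hS.dense_domain (T := S)
  rwa [isSelfAdjoint_def.mp hS] at this

lemma _root_.IsSelfAdjoint.exists_mem_domain_of_inner_eq (hS : IsSelfAdjoint S) {v w : E}
    (h : ∀ x : S.domain, ⟪w, (x : E)⟫_ℂ = ⟪v, S x⟫_ℂ) : ∃ hv : v ∈ S.domain, S ⟨v, hv⟩ = w := by
  have hv : v ∈ S†.domain := mem_adjoint_domain_of_exists v ⟨w, h⟩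
  have hSw : S† ⟨v, hv⟩ = w := adjoint_apply_eq hS.dense_domain _ h
  have hle : S† ≤ S := (isSelfAdjoint_def.mp hS).le
  exact ⟨hle.1 hv, (hle.2 rfl).symm.trans hSw⟩

lemma IsClosed.isClosed_range_subScalar (hS : S.IsClosed) {l : ℂ} {δ : ℝ} (hδ : 0 < δ)
    (hb : ∀ f : S.domain, δ * ‖(f : E)‖ ≤ ‖S.subScalar l f‖) :
    _root_.IsClosed (Set.range (S.subScalar l)) := by
  refine IsSeqClosed.isClosed fun u x hu hx => ?_
  choose g hg using hu
  have hcauchy : CauchySeq fun n => (g n : E) := by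
    refine Metric.cauchySeq_iff.2 fun ε hε => ?_
    obtain ⟨N, hN⟩ := Metric.cauchySeq_iff.1 hx.cauchySeq (δ * ε) (by positivity)
    refine ⟨N, fun m hm n hn => ?_⟩
    have := hb (g m - g n)
    rw [LinearMap.map_sub, hg, hg, ← dist_eq_norm, Submodule.coe_sub, ← dist_eq_norm] at this
    exact lt_of_mul_lt_mul_left (this.trans_lt (hN m hm n hn)) hδ.le
  obtain ⟨y, hy⟩ := cauchySeq_tendsto_of_complete hcauchy
  have hSg : Filter.Tendsto (fun n => S (g n)) Filter.atTop (nhds (x + l • y)) := by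
    have : ∀ n, S (g n) = u n + l • (g n : E) := fun n => by
      rw [← hg, subScalar_apply, sub_add_cancel]
    simpa only [this] using hx.add (hy.const_smul l)
  have hgraph : (y, x + l • y) ∈ S.graph :=
    hS.mem_of_tendsto (hy.prodMk_nhds hSg) (Filter.Eventually.of_forall fun n => S.mem_graph (g n))
  obtain ⟨z, hzy, hSz⟩ := (S.mem_graph_iff).mp hgraph
  exact ⟨z, by rw [subScalar_apply, hSz, hzy, add_sub_cancel_right]⟩

lemma _root_.IsSelfAdjoint.surjective_subScalar_of_coercive (hS : IsSelfAdjoint S) {l δ : ℝ}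
    (hδ : 0 < δ) (hco : ∀ f : S.domain, δ * ‖(f : E)‖ ^ 2 ≤ (⟪S.subScalar l f, (f : E)⟫_ℂ).re) :
    Function.Surjective (S.subScalar l) := by
  have hb : ∀ f : S.domain, δ * ‖(f : E)‖ ≤ ‖S.subScalar l f‖ := fun f => by
    rcases (norm_nonneg (f : E)).eq_or_lt with h0 | hpos
    · simp [← h0]
    · refine le_of_mul_le_mul_right ?_ hpos
      calc δ * ‖(f : E)‖ * ‖(f : E)‖ = δ * ‖(f : E)‖ ^ 2 := by ring
        _ ≤ (⟪S.subScalar l f, (f : E)⟫_ℂ).re := hco f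
        _ ≤ ‖S.subScalar l f‖ * ‖(f : E)‖ := re_inner_le_norm (𝕜 := ℂ) _ _
  have hclosed := hS.isClosed.isClosed_range_subScalar hδ hb
  have horth : (LinearMap.range (S.subScalar l))ᗮ = ⊥ := by
    refine (Submodule.eq_bot_iff _).2 fun v hv => ?_
    have hSv : ∀ f : S.domain, ⟪(l : ℂ) • v, (f : E)⟫_ℂ = ⟪v, S f⟫_ℂ := fun f => by
      have := (Submodule.mem_orthogonal' _ _).1 hv _ (LinearMap.mem_range_self _ f)
      rw [subScalar_apply, inner_sub_right, sub_eq_zero] at this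
      rw [this, inner_smul_left, inner_smul_right, Complex.conj_ofReal]
    obtain ⟨hvS, hSv⟩ := hS.exists_mem_domain_of_inner_eq hSv
    have := hco ⟨v, hvS⟩
    rw [subScalar_apply, hSv, sub_self, inner_zero_left, Complex.zero_re] at this
    exact norm_eq_zero.mp (pow_eq_zero_iff two_ne_zero |>.mp
      (le_antisymm (nonpos_of_mul_nonpos_right this hδ) (sq_nonneg _)))
  have htop : LinearMap.range (S.subScalar l) = ⊤ := by
    rw [← hclosed.submodule_topologicalClosure_eq (s := LinearMap.range (S.subScalar l))]
    exact Submodule.topologicalClosure_eq_top_iff.2 horth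
  exact LinearMap.range_eq_top.1 htop

lemma IsFormalAdjoint.dense_domain (hS : S.IsFormalAdjoint S) {l : ℝ}
    (hsurj : Function.Surjective (S.subScalar l)) : Dense (S.domain : Set E) := by
  rw [Submodule.dense_iff_topologicalClosure_eq_top, Submodule.topologicalClosure_eq_top_iff,
    Submodule.eq_bot_iff]
  intro v hv
  obtain ⟨f, rfl⟩ := hsurj v
  have hf : (f : E) = 0 := eq_zero_of_forall_inner_subScalar_eq_zero hsurj fun g => by
    rw [← hS.inner_subScalar, inner_eq_zero_symm]
    exact (Submodule.mem_orthogonal _ _).1 hv g g.2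
  rw [(Submodule.coe_eq_zero).1 hf, _root_.map_zero]

lemma IsFormalAdjoint.isSelfAdjoint (hS : S.IsFormalAdjoint S) {l : ℝ}
    (hsurj : Function.Surjective (S.subScalar l)) : IsSelfAdjoint S := by
  have hdense := hS.dense_domain hsurj
  have hle : S ≤ S† := hS.le_adjoint hdense
  refine (eq_of_le_of_domain_eq hle (le_antisymm hle.1 fun y hy => ?_)).symm
  obtain ⟨u, hu⟩ := hsurj (S† ⟨y, hy⟩ - (l : ℂ) • y)
  have hyu : (u : E) - y = 0 := eq_zero_of_forall_inner_subScalar_eq_zero hsurj fun g => by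
    rw [inner_sub_left, ← hS.inner_subScalar, hu, subScalar_apply, inner_sub_right,
      ← adjoint_isFormalAdjoint hdense ⟨y, hy⟩ g, inner_sub_left, inner_smul_left,
      inner_smul_right, Complex.conj_ofReal]
    ring
  exact sub_eq_zero.1 hyu ▸ u.2

lemma IsFormalAdjoint.exists_inverse_subScalar (hS : S.IsFormalAdjoint S) {l : ℝ}
    (hsurj : Function.Surjective (S.subScalar l)) :
    ∃ r : E →L[ℂ] E, IsSelfAdjoint r ∧ ∀ f : S.domain, r (S.subScalar l f) = f := by
  have hinj : Function.Injective (S.subScalar l) := by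
    refine (injective_iff_map_eq_zero _).2 fun f hf => Subtype.ext ?_
    refine eq_zero_of_forall_inner_subScalar_eq_zero hsurj fun g => ?_
    rw [← hS.inner_subScalar, hf, inner_zero_left]
  let e := LinearEquiv.ofBijective _ ⟨hinj, hsurj⟩
  let r : E →ₗ[ℂ] E := S.domain.subtype ∘ₗ e.symm.toLinearMap
  have hre : ∀ f, r (S.subScalar l f) = f := fun f =>
    congrArg Subtype.val (LinearEquiv.ofBijective_symm_apply_apply _ f)
  have hsymm : r.IsSymmetric := fun x y => by
    obtain ⟨a, rfl⟩ := hsurj x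
    obtain ⟨b, rfl⟩ := hsurj y
    rw [hre, hre, hS.inner_subScalar]
  exact ⟨⟨r, hsymm.continuous⟩, ContinuousLinearMap.isSelfAdjoint_iff_isSymmetric.2 hsymm, hre⟩

lemma isUnit_algebraMap_sub_of_inverse {r s : E →L[ℂ] E} (hr : IsSelfAdjoint r)
    (hs : IsSelfAdjoint s) {l m : ℝ} (hm : m ≠ 0)
    (hsurj : Function.Surjective (S.subScalar (l + m⁻¹ : ℝ)))
    (hrS : ∀ f, r (S.subScalar l f) = f) (hsS : ∀ f, s (S.subScalar (l + m⁻¹ : ℝ) f) = f) :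
    IsUnit (algebraMap ℝ (E →L[ℂ] E) m - r) := by
  set a := algebraMap ℝ (E →L[ℂ] E) m - r
  -- the resolvent identity: `(m - r)⁻¹ = m⁻¹ (1 + m⁻¹ s)`
  set b := m⁻¹ • (1 + m⁻¹ • s)
  have hab : a * b = 1 := by
    ext h
    obtain ⟨g, rfl⟩ := hsurj h
    have hshift : S.subScalar (l + m⁻¹ : ℝ) g = S.subScalar l g - m⁻¹ • (g : E) := by
      simp only [subScalar_apply, Complex.ofReal_add, add_smul, Complex.ofReal_inv,
        Complex.coe_smul]
      module
    have hrg : r (S.subScalar (l + m⁻¹ : ℝ) g) = g - m⁻¹ • r g := by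
      rw [hshift, _root_.map_sub, hrS, ContinuousLinearMap.map_smul_of_tower]
    simp only [a, b, mul_apply_eq_comp, _root_.sub_apply, _root_.smul_apply, _root_.add_apply,
      one_apply_eq_self, hsS, Algebra.algebraMap_eq_smul_one, _root_.map_add,
      ContinuousLinearMap.map_smul_of_tower, hrg]
    rw [smul_smul, mul_inv_cancel₀ hm, one_smul]
    module
  have hba : b * a = 1 := by
    simpa [star_mul, a, b, hr.star_eq, hs.star_eq, ← algebraMap_star_comm] using congrArg star hab
  exact ⟨⟨a, b, hab, hba⟩, rfl⟩

lemma IsFormalAdjoint.le_re_inner_of_surjective (hS : S.IsFormalAdjoint S) {l₁ : ℝ}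
    (hsurj : ∀ l ≤ l₁, Function.Surjective (S.subScalar l)) (f : S.domain) :
    l₁ * ‖(f : E)‖ ^ 2 ≤ (⟪S f, (f : E)⟫_ℂ).re := by
  obtain ⟨r, hr, hrS⟩ := hS.exists_inverse_subScalar (hsurj l₁ le_rfl)
  have hr_nonneg : 0 ≤ r := by
    refine (StarOrderedRing.nonneg_iff_spectrum_nonneg (R := ℝ) r hr).2 fun m hm => ?_
    by_contra! hneg
    have hl : l₁ + m⁻¹ ≤ l₁ := add_le_of_nonpos_right (inv_nonpos.2 hneg.le)
    obtain ⟨s, hs, hsS⟩ := hS.exists_inverse_subScalar (hsurj _ hl)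
    exact spectrum.mem_iff.1 hm
      (isUnit_algebraMap_sub_of_inverse hr hs hneg.ne (hsurj _ hl) hrS hsS)
  have h := ((ContinuousLinearMap.nonneg_iff_isPositive r).1 hr_nonneg).re_inner_nonneg_left
    (S.subScalar l₁ f)
  rw [hrS, inner_re_symm] at h
  change 0 ≤ (⟪S.subScalar l₁ f, (f : E)⟫_ℂ).re at h
  linarith [re_inner_subScalar_self S l₁ f]

lemma IsFormalAdjoint.exists_sub_apply_eq {B : E →ₗ.[ℂ] E} (hB : B.IsFormalAdjoint B)
    {c : ℝ} (hc₀ : 0 ≤ c) (hc : ∀ φ : B.domain, (⟪B φ, (φ : E)⟫_ℂ).re ≤ c * ‖(φ : E)‖ ^ 2)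
    {R M : E →L[ℂ] E} (hR : IsSelfAdjoint R) (hRB : ∀ x, R x ∈ B.domain) (hRR : R ∘L R = M)
    (hcM : c * ‖M‖ < 1) (b : E) : ∃ x, ∃ hx : M x ∈ B.domain, x - B ⟨M x, hx⟩ = b := by
  let BR : E →ₗ[ℂ] E := B.toFun ∘ₗ (R : E →ₗ[ℂ] E).codRestrict B.domain hRB
  have hBR : ∀ x, BR x = B ⟨R x, hRB x⟩ := fun x => rfl
  have hRsymm : ∀ x y, ⟪R x, y⟫_ℂ = ⟪x, R y⟫_ℂ := hR.isSymmetric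
  have hsymm : ((R : E →ₗ[ℂ] E) ∘ₗ BR).IsSymmetric := fun x y => by
    simp only [LinearMap.comp_apply, ContinuousLinearMap.coe_coe, hBR]
    rw [hRsymm]
    exact (hB ⟨R x, hRB x⟩ ⟨R y, hRB y⟩).trans (hRsymm _ _)
  let K : E →L[ℂ] E := ⟨_, hsymm.continuous⟩
  have hK : ∀ x, K x = R (B ⟨R x, hRB x⟩) := fun x => rfl
  have hnormR : ‖R‖ ^ 2 = ‖M‖ := by rw [← hRR, ← hR.norm_mul_self]; rfl
  have hco : ∀ x, ‖x‖ ^ 2 * (1 - c * ‖M‖) ≤ ‖⟪(1 - K) x, x⟫_ℂ‖ := fun x => by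
    have hRx : ‖R x‖ ^ 2 ≤ ‖M‖ * ‖x‖ ^ 2 := by
      rw [← hnormR, ← mul_pow]
      exact pow_le_pow_left₀ (norm_nonneg _) (R.le_opNorm x) 2
    calc ‖x‖ ^ 2 * (1 - c * ‖M‖) ≤ ‖x‖ ^ 2 - c * ‖R x‖ ^ 2 := by nlinarith
      _ ≤ ‖x‖ ^ 2 - (⟪B ⟨R x, hRB x⟩, R x⟫_ℂ).re := by linarith [hc ⟨R x, hRB x⟩]
      _ = (⟪(1 - K) x, x⟫_ℂ).re := by
        rw [_root_.sub_apply, one_apply_eq_self, inner_sub_left, Complex.sub_re, hK,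
          hRsymm, ← inner_self_eq_norm_sq (𝕜 := ℂ)]
        rfl
      _ ≤ ‖⟪(1 - K) x, x⟫_ℂ‖ := Complex.re_le_norm _
  have hunit : IsUnit (1 - K) :=
    ContinuousLinearMap.isUnit_of_forall_le_norm_inner_map _ (c := ⟨_, (sub_pos.2 hcM).le⟩)
      (sub_pos.2 hcM) hco
  obtain ⟨w, hw⟩ := (ContinuousLinearMap.isUnit_iff_bijective.1 hunit).2 (R b)
  have hw' : w = R b + K w := by rw [← hw, _root_.sub_apply, one_apply_eq_self, sub_add_cancel]
  set x := b + B ⟨R w, hRB w⟩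
  have hRx : R x = w := by rw [_root_.map_add, ← hK, ← hw']
  have hMx : M x = R w := by rw [← hRR, ContinuousLinearMap.comp_apply, hRx]
  refine ⟨x, hMx ▸ hRB w, ?_⟩
  simp only [hMx, x, add_sub_cancel_right]

end Complete

end LinearPMap

section BoundaryTriple

open LinearPMap

variable {H G : Type*} [NormedAddCommGroup H] [InnerProductSpace ℂ H]
  [NormedAddCommGroup G] [InnerProductSpace ℂ G]
  {T : H →ₗ.[ℂ] H} {Γ₀ Γ₁ : T.domain →ₗ[ℂ] G} {B : G →ₗ.[ℂ] G}

lemma isFormalAdjoint_of_green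
    (hGreen : ∀ f g : T.domain,
      ⟪T f, (g : H)⟫_ℂ - ⟪(f : H), T g⟫_ℂ = ⟪Γ₁ f, Γ₀ g⟫_ℂ - ⟪Γ₀ f, Γ₁ g⟫_ℂ)
    (hB : B.IsFormalAdjoint B) (hΓ₁B : ∀ f, Γ₁ f ∈ B.domain) {A : H →ₗ.[ℂ] H} (hAT : A ≤ T)
    (hA : ∀ f : T.domain, (f : H) ∈ A.domain ↔ Γ₀ f = B ⟨Γ₁ f, hΓ₁B f⟩) :
    A.IsFormalAdjoint A := fun f g => by
  let f' := Submodule.inclusion hAT.1 f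
  let g' := Submodule.inclusion hAT.1 g
  have h := hGreen f' g'
  rw [(hA f').1 f.2, (hA g').1 g.2, hB ⟨Γ₁ f', hΓ₁B f'⟩ ⟨Γ₁ g', hΓ₁B g'⟩, sub_self] at h
  rw [apply_comp_inclusion hAT f, apply_comp_inclusion hAT g]
  exact sub_eq_zero.1 h

lemma exists_eq_smul_and_boundary_eq {A₀ : H →ₗ.[ℂ] H} (hA₀T : A₀ ≤ T)
    (hΓ₀ : ∀ f : A₀.domain, Γ₀ (Submodule.inclusion hA₀T.1 f) = 0) {l : ℂ}
    (hsurj : Function.Surjective (A₀.subScalar l))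
    (g : T.domain) : ∃ k : T.domain, T k = l • (k : H) ∧ Γ₀ k = Γ₀ g := by
  obtain ⟨f, hf⟩ := hsurj (T.subScalar l g)
  refine ⟨g - Submodule.inclusion hA₀T.1 f, ?_, by rw [_root_.map_sub, hΓ₀, sub_zero]⟩
  rw [subScalar_apply, subScalar_apply, apply_comp_inclusion hA₀T] at hf
  rw [T.map_sub, Submodule.coe_sub, Submodule.coe_inclusion]
  linear_combination (norm := module) -hf

lemma exists_eq_smul_and_boundary_condition {l : ℂ}
    (hdecomp : ∀ g : T.domain, ∃ k : T.domain, T k = l • (k : H) ∧ Γ₀ k = Γ₀ g)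
    {M : G →L[ℂ] G} (hWeyl : ∀ k : T.domain, T k = l • (k : H) → M (Γ₀ k) = Γ₁ k)
    (hsolve : ∀ b, ∃ x, ∃ hx : M x ∈ B.domain, x - B ⟨M x, hx⟩ = b)
    (hBM : ∀ x (hx : M x ∈ B.domain), B ⟨M x, hx⟩ ∈ Set.range Γ₀)
    (hΓ₁B : ∀ f, Γ₁ f ∈ B.domain) (hBΓ₁ : ∀ f, B ⟨Γ₁ f, hΓ₁B f⟩ ∈ Set.range Γ₀)
    (f : T.domain) (hf : Γ₀ f = 0) :
    ∃ k : T.domain, T k = l • (k : H) ∧ Γ₀ (f + k) = B ⟨Γ₁ (f + k), hΓ₁B (f + k)⟩ := by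
  obtain ⟨x, hx, hxb⟩ := hsolve (B ⟨Γ₁ f, hΓ₁B f⟩)
  obtain ⟨g₁, hg₁⟩ := hBΓ₁ f
  obtain ⟨g₂, hg₂⟩ := hBM x hx
  obtain ⟨k, hk, hΓ₀k⟩ := hdecomp (g₁ + g₂)
  have hxk : Γ₀ k = x := by rw [hΓ₀k, _root_.map_add, hg₁, hg₂, ← hxb, sub_add_cancel]
  refine ⟨k, hk, ?_⟩
  have hsplit : (⟨Γ₁ (f + k), hΓ₁B (f + k)⟩ : B.domain) = ⟨Γ₁ f, hΓ₁B f⟩ + ⟨M x, hx⟩ :=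
    Subtype.ext (by
      change Γ₁ (f + k) = Γ₁ f + M x
      rw [_root_.map_add, ← hWeyl k hk, hxk])
  rw [hsplit, B.map_add, _root_.map_add, hf, hxk, zero_add, ← hxb, sub_add_cancel]

lemma surjective_subScalar_of_boundary_condition {A A₀ : H →ₗ.[ℂ] H} (hAT : A ≤ T)
    (hΓ₁B : ∀ f, Γ₁ f ∈ B.domain)
    (hA : ∀ f : T.domain, (f : H) ∈ A.domain ↔ Γ₀ f = B ⟨Γ₁ f, hΓ₁B f⟩) (hA₀T : A₀ ≤ T)
    (hΓ₀ : ∀ f : A₀.domain, Γ₀ (Submodule.inclusion hA₀T.1 f) = 0) {l : ℂ}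
    (hsurj : Function.Surjective (A₀.subScalar l))
    (hsolve : ∀ f : T.domain, Γ₀ f = 0 →
      ∃ k : T.domain, T k = l • (k : H) ∧ Γ₀ (f + k) = B ⟨Γ₁ (f + k), hΓ₁B (f + k)⟩) :
    Function.Surjective (A.subScalar l) := fun h => by
  obtain ⟨f₀, hf₀⟩ := hsurj h
  obtain ⟨k, hk, hbc⟩ := hsolve _ (hΓ₀ f₀)
  set f := Submodule.inclusion hA₀T.1 f₀ + k
  refine ⟨⟨f, (hA f).2 hbc⟩, ?_⟩
  rw [subScalar_apply, hAT.2 (y := f) rfl, T.map_add, hk, ← apply_comp_inclusion hA₀T, ← hf₀,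
    subScalar_apply]
  simp only [f, Submodule.coe_add, Submodule.coe_inclusion]
  module

end BoundaryTriple

theorem stmt9_general
    {H G : Type*}
    [NormedAddCommGroup H] [InnerProductSpace ℂ H] [CompleteSpace H]
    [NormedAddCommGroup G] [InnerProductSpace ℂ G] [CompleteSpace G]
    (T : H →ₗ.[ℂ] H)
    (Γ₀ Γ₁ : T.domain →ₗ[ℂ] G)
    -- abstract Green identity
    (hGreen : ∀ f g : T.domain,
      ⟪T f, (g : H)⟫_ℂ - ⟪(f : H), T g⟫_ℂ = ⟪Γ₁ f, Γ₀ g⟫_ℂ - ⟪Γ₀ f, Γ₁ g⟫_ℂ)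
    -- A₀ = T ↾ ker Γ₀ is self-adjoint and bounded from below by σ₀
    (A₀ : H →ₗ.[ℂ] H) (hA₀sub : A₀.domain ≤ T.domain)
    (hA₀eq : ∀ f : A₀.domain, A₀ f = T ⟨f.1, hA₀sub f.2⟩)
    (hA₀dom : ∀ x (hx : x ∈ T.domain), x ∈ A₀.domain ↔ Γ₀ ⟨x, hx⟩ = 0)
    (hA₀sa : IsSelfAdjoint A₀)
    (σ₀ : ℝ)
    (hA₀lb : ∀ f : A₀.domain, σ₀ * ‖(f : H)‖ ^ 2 ≤ (⟪A₀ f, (f : H)⟫_ℂ).re)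
    -- Mbar λ is the (bounded) closure of the Weyl function M(λ) for λ < σ₀
    (Mbar : ℝ → (G →L[ℂ] G))
    (hWeyl : ∀ l : ℝ, l < σ₀ → ∀ f : T.domain,
      T f = (l : ℂ) • (f : H) → Mbar l (Γ₀ f) = Γ₁ f)
    -- (i) ‖Mbar λ‖ → 0 as λ → −∞
    (hdecay : Filter.Tendsto (fun l => ‖Mbar l‖) Filter.atBot (nhds 0))
    -- R λ = (Mbar λ)^{1/2}, the non-negative square root
    (R : ℝ → (G →L[ℂ] G))
    (hRsa : ∀ l : ℝ, l < σ₀ → IsSelfAdjoint (R l))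
    (hRR : ∀ l : ℝ, l < σ₀ → R l ∘L R l = Mbar l)
    -- B self-adjoint and bounded from above
    (B : G →ₗ.[ℂ] G) (hBsa : IsSelfAdjoint B)
    (hBub : ∃ c : ℝ, ∀ φ : B.domain, (⟪B φ, (φ : G)⟫_ℂ).re ≤ c * ‖(φ : G)‖ ^ 2)
    -- (ii) ran (Mbar λ)^{1/2} ⊆ dom B for all λ < σ₀
    (hranR : ∀ l : ℝ, l < σ₀ → ∀ x : G, R l x ∈ B.domain)
    -- (iii) B (ran Mbar λ) ⊆ ran Γ₀ for all λ < σ₀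
    (hBM : ∀ (l : ℝ), l < σ₀ → ∀ (x : G) (h : Mbar l x ∈ B.domain),
      B ⟨Mbar l x, h⟩ ∈ Set.range Γ₀)
    -- (iv) ran Γ₁ ⊆ dom B
    (hranΓ₁ : ∀ f : T.domain, Γ₁ f ∈ B.domain)
    -- (v) B (ran Γ₁) ⊆ ran Γ₀
    (hBΓ₁ : ∀ f : T.domain, B ⟨Γ₁ f, hranΓ₁ f⟩ ∈ Set.range Γ₀)
    -- A = A_[B] = T ↾ {f ∈ dom T : Γ₀ f = B Γ₁ f}
    (A : H →ₗ.[ℂ] H) (hAsub : A.domain ≤ T.domain)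
    (hAeq : ∀ f : A.domain, A f = T ⟨f.1, hAsub f.2⟩)
    (hAdom : ∀ x (hx : x ∈ T.domain),
      x ∈ A.domain ↔ Γ₀ ⟨x, hx⟩ = B ⟨Γ₁ ⟨x, hx⟩, hranΓ₁ ⟨x, hx⟩⟩) :
    -- conclusion: A_[B] is self-adjoint and bounded from below
    IsSelfAdjoint A ∧
      ∃ c : ℝ, ∀ f : A.domain, c * ‖(f : H)‖ ^ 2 ≤ (⟪A f, (f : H)⟫_ℂ).re := by
  obtain ⟨c, hc⟩ := hBub
  have hc_max : ∀ φ : B.domain, (⟪B φ, (φ : G)⟫_ℂ).re ≤ max c 0 * ‖(φ : G)‖ ^ 2 := fun φ =>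
    (hc φ).trans (mul_le_mul_of_nonneg_right (le_max_left c 0) (sq_nonneg _))
  obtain ⟨l₁, hl₁⟩ : ∃ l₁, ∀ l ≤ l₁, l < σ₀ ∧ max c 0 * ‖Mbar l‖ < 1 := by
    have h : Filter.Tendsto (fun l => max c 0 * ‖Mbar l‖) Filter.atBot (nhds 0) := by
      simpa using hdecay.const_mul (max c 0)
    exact Filter.eventually_atBot.1
      ((Filter.eventually_lt_atBot σ₀).and (h.eventually (gt_mem_nhds one_pos)))
  have hAT : A ≤ T := ⟨hAsub, fun f _ hfg => (hAeq f).trans (congrArg T (Subtype.ext hfg))⟩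
  have hA₀T : A₀ ≤ T := ⟨hA₀sub, fun f _ hfg => (hA₀eq f).trans (congrArg T (Subtype.ext hfg))⟩
  have hΓ₀ : ∀ f : A₀.domain, Γ₀ (Submodule.inclusion hA₀T.1 f) = 0 := fun f =>
    (hA₀dom f (hA₀sub f.2)).1 f.2
  have hA₀surj : ∀ l < σ₀, Function.Surjective (A₀.subScalar l) := fun l hl =>
    hA₀sa.surjective_subScalar_of_coercive (sub_pos.2 hl) fun f => by
      rw [LinearPMap.re_inner_subScalar_self]
      linarith [hA₀lb f, sub_mul σ₀ l (‖(f : H)‖ ^ 2)]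
  have hA := fun f : T.domain => hAdom f f.2
  have hsymm := isFormalAdjoint_of_green hGreen hBsa.isFormalAdjoint hranΓ₁ hAT hA
  have hsurj : ∀ l ≤ l₁, Function.Surjective (A.subScalar l) := fun l hl => by
    obtain ⟨hlσ, hsmall⟩ := hl₁ l hl
    have hsolve := hBsa.isFormalAdjoint.exists_sub_apply_eq (le_max_right c 0) hc_max (hRsa l hlσ)
      (hranR l hlσ) (hRR l hlσ) hsmall
    have hdecomp := exists_eq_smul_and_boundary_eq hA₀T hΓ₀ (hA₀surj l hlσ)
    exact surjective_subScalar_of_boundary_condition hAT hranΓ₁ hA hA₀T hΓ₀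
      (hA₀surj l hlσ) (exists_eq_smul_and_boundary_condition hdecomp (hWeyl l hlσ) hsolve
        (hBM l hlσ) hranΓ₁ hBΓ₁)
  exact ⟨hsymm.isSelfAdjoint (hsurj l₁ le_rfl), l₁, hsymm.le_re_inner_of_surjective hsurj⟩

/-- Let `{G, Γ₀, Γ₁}` be a quasi boundary triple for `T ⊂ S*` with Weyl
function `M`, `A₀ = T ↾ ker Γ₀` self-adjoint and bounded from below (with lower bound
`σ₀`), the values `M(λ)` bounded with closures `Mbar λ` satisfying `‖Mbar λ‖ → 0` as
`λ → −∞`, and let `B` be self-adjoint and bounded from above with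
`ran (Mbar λ)^{1/2} ⊆ dom B` and `B (ran Mbar λ) ⊆ ran Γ₀` for all `λ < σ₀`,
`ran Γ₁ ⊆ dom B` and `B (ran Γ₁) ⊆ ran Γ₀`.  Then
`A_[B] = T ↾ {f : Γ₀ f = B Γ₁ f}` is self-adjoint and bounded from below. -/
theorem stmt9
    {H G : Type*}
    [NormedAddCommGroup H] [InnerProductSpace ℂ H] [CompleteSpace H]
    [NormedAddCommGroup G] [InnerProductSpace ℂ G] [CompleteSpace G]
    (T : H →ₗ.[ℂ] H) (hTdense : Dense (T.domain : Set H))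
    (Γ₀ Γ₁ : T.domain →ₗ[ℂ] G)
    -- abstract Green identity
    (hGreen : ∀ f g : T.domain,
      ⟪T f, (g : H)⟫_ℂ - ⟪(f : H), T g⟫_ℂ = ⟪Γ₁ f, Γ₀ g⟫_ℂ - ⟪Γ₀ f, Γ₁ g⟫_ℂ)
    -- (Γ₀, Γ₁) has dense range
    (hdense : Dense (Set.range fun f : T.domain => (Γ₀ f, Γ₁ f)))
    -- A₀ = T ↾ ker Γ₀ is self-adjoint and bounded from below by σ₀
    (A₀ : H →ₗ.[ℂ] H) (hA₀sub : A₀.domain ≤ T.domain)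
    (hA₀eq : ∀ f : A₀.domain, A₀ f = T ⟨f.1, hA₀sub f.2⟩)
    (hA₀dom : ∀ x (hx : x ∈ T.domain), x ∈ A₀.domain ↔ Γ₀ ⟨x, hx⟩ = 0)
    (hA₀sa : IsSelfAdjoint A₀)
    (σ₀ : ℝ)
    (hA₀lb : ∀ f : A₀.domain, σ₀ * ‖(f : H)‖ ^ 2 ≤ (⟪A₀ f, (f : H)⟫_ℂ).re)
    -- Mbar λ is the (bounded) closure of the Weyl function M(λ) for λ < σ₀
    (Mbar : ℝ → (G →L[ℂ] G))
    (hWeyl : ∀ l : ℝ, l < σ₀ → ∀ f : T.domain,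
      T f = (l : ℂ) • (f : H) → Mbar l (Γ₀ f) = Γ₁ f)
    -- (i) ‖Mbar λ‖ → 0 as λ → −∞
    (hdecay : Filter.Tendsto (fun l => ‖Mbar l‖) Filter.atBot (nhds 0))
    -- R λ = (Mbar λ)^{1/2}, the non-negative square root
    (R : ℝ → (G →L[ℂ] G))
    (hRsa : ∀ l : ℝ, l < σ₀ → IsSelfAdjoint (R l))
    (hRnn : ∀ l : ℝ, l < σ₀ → ∀ x : G, 0 ≤ (⟪R l x, x⟫_ℂ).re)
    (hRR : ∀ l : ℝ, l < σ₀ → R l ∘L R l = Mbar l)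
    -- B self-adjoint and bounded from above
    (B : G →ₗ.[ℂ] G) (hBsa : IsSelfAdjoint B)
    (hBub : ∃ c : ℝ, ∀ φ : B.domain, (⟪B φ, (φ : G)⟫_ℂ).re ≤ c * ‖(φ : G)‖ ^ 2)
    -- (ii) ran (Mbar λ)^{1/2} ⊆ dom B for all λ < σ₀
    (hranR : ∀ l : ℝ, l < σ₀ → ∀ x : G, R l x ∈ B.domain)
    -- (iii) B (ran Mbar λ) ⊆ ran Γ₀ for all λ < σ₀
    (hBM : ∀ (l : ℝ), l < σ₀ → ∀ (x : G) (h : Mbar l x ∈ B.domain),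
      B ⟨Mbar l x, h⟩ ∈ Set.range Γ₀)
    -- (iv) ran Γ₁ ⊆ dom B
    (hranΓ₁ : ∀ f : T.domain, Γ₁ f ∈ B.domain)
    -- (v) B (ran Γ₁) ⊆ ran Γ₀
    (hBΓ₁ : ∀ f : T.domain, B ⟨Γ₁ f, hranΓ₁ f⟩ ∈ Set.range Γ₀)
    -- A = A_[B] = T ↾ {f ∈ dom T : Γ₀ f = B Γ₁ f}
    (A : H →ₗ.[ℂ] H) (hAsub : A.domain ≤ T.domain)
    (hAeq : ∀ f : A.domain, A f = T ⟨f.1, hAsub f.2⟩)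
    (hAdom : ∀ x (hx : x ∈ T.domain),
      x ∈ A.domain ↔ Γ₀ ⟨x, hx⟩ = B ⟨Γ₁ ⟨x, hx⟩, hranΓ₁ ⟨x, hx⟩⟩) :
    -- conclusion: A_[B] is self-adjoint and bounded from below
    IsSelfAdjoint A ∧
      ∃ c : ℝ, ∀ f : A.domain, c * ‖(f : H)‖ ^ 2 ≤ (⟪A f, (f : H)⟫_ℂ).re :=
  stmt9_general T Γ₀ Γ₁ hGreen A₀ hA₀sub hA₀eq hA₀dom hA₀sa σ₀ hA₀lb Mbar hWeyl hdecay R hRsa hRR B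
    hBsa hBub hranR hBM hranΓ₁ hBΓ₁ A hAsub hAeq hAdom
end

section
/- Under the assumptions of the preceding self-adjointness theorem (quasi boundary triple, A₀ bounded below, ‖\overline{M(λ)}‖ → 0 as λ → −∞, B self-adjoint bounded above with the range/domain conditions), if additionally B ≤ 0, then min σ(A_[B]) ≥ min σ(A₀). -/
/-!
For `λ < σ₀` the operator `A₀ - λ` is onto, so every `f ∈ dom T` splits as `f = f₀ + h_λ` with
`f₀ ∈ dom A₀` and `T h_λ = λ h_λ`, `Γ₀ h_λ = Γ₀ f`. Green's identity for `f₀, h_λ` together with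
`A₀ ≥ σ₀` gives
  `Re⟪(T - σ₀) f, f⟫ ≥ 2 Re⟪(T - σ₀) f, h_λ⟫ + Re⟪M(λ) Γ₀ f, Γ₀ f⟫ - Re⟪Γ₁ f, Γ₀ f⟫`,
and for `f ∈ dom A_[B]` the last term is `-Re⟪B Γ₁ f, Γ₁ f⟫ ≥ 0`. Comparing `h_λ` with `h_{λ+1}`
in the same way gives `‖h_λ‖² ≤ Re⟪(M(λ+1) - M(λ)) Γ₀ f, Γ₀ f⟫`. Since `‖M(λ)‖ → 0` as
`λ → -∞`, both `h_λ` and `Re⟪M(λ) Γ₀ f, Γ₀ f⟫` tend to `0`.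
-/

open scoped InnerProductSpace
open Filter Topology RCLike

namespace LinearPMap

variable {𝕜 E : Type*} [RCLike 𝕜] [NormedAddCommGroup E] [InnerProductSpace 𝕜 E]
  {A : E →ₗ.[𝕜] E} {σ₀ l : ℝ}

def subSMul (A : E →ₗ.[𝕜] E) (l : ℝ) : A.domain →ₗ[𝕜] E := A.toFun - (l : 𝕜) • A.domain.subtype

theorem subSMul_apply (g : A.domain) : A.subSMul l g = A g - (l : 𝕜) • (g : E) := rfl

theorem mul_norm_le_norm_subSMul
    (hlb : ∀ g : A.domain, σ₀ * ‖(g : E)‖ ^ 2 ≤ re ⟪A g, (g : E)⟫_𝕜) (g : A.domain) :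
    (σ₀ - l) * ‖(g : E)‖ ≤ ‖A.subSMul l g‖ := by
  rcases (norm_nonneg (g : E)).eq_or_lt with hg | hg
  · rw [← hg, mul_zero]; exact norm_nonneg _
  refine le_of_mul_le_mul_right ?_ hg
  calc (σ₀ - l) * ‖(g : E)‖ * ‖(g : E)‖ ≤ re ⟪A.subSMul l g, (g : E)⟫_𝕜 := by
        have := hlb g
        rw [subSMul_apply, inner_sub_left, _root_.map_sub, inner_smul_left, conj_ofReal,
          re_ofReal_mul, inner_self_eq_norm_sq]
        nlinarith
    _ ≤ ‖A.subSMul l g‖ * ‖(g : E)‖ := re_inner_le_norm _ _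

variable [CompleteSpace E]

theorem isClosed_range_subSMul (hA : IsSelfAdjoint A)
    (hlb : ∀ g : A.domain, σ₀ * ‖(g : E)‖ ^ 2 ≤ re ⟪A g, (g : E)⟫_𝕜) (hl : l < σ₀) :
    _root_.IsClosed (LinearMap.range (A.subSMul l) : Set E) := by
  refine IsSeqClosed.isClosed fun u y hu huy => ?_
  choose g hg using fun n => LinearMap.mem_range.mp (hu n)
  have hg_cauchy : CauchySeq fun n => (g n : E) := by
    refine Metric.cauchySeq_iff.mpr fun ε hε => ?_
    obtain ⟨N, hN⟩ := Metric.cauchySeq_iff.mp huy.cauchySeq ((σ₀ - l) * ε) (by nlinarith)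
    refine ⟨N, fun m hm n hn => ?_⟩
    have h := mul_norm_le_norm_subSMul (l := l) hlb (g m - g n)
    rw [_root_.map_sub, hg, hg, ← dist_eq_norm] at h
    rw [dist_eq_norm]
    have := hN m hm n hn
    exact lt_of_mul_lt_mul_left (h.trans_lt this) (by linarith)
  obtain ⟨x, hx⟩ := cauchySeq_tendsto_of_complete hg_cauchy
  have hAg : Tendsto (fun n => ((g n : E), A (g n))) atTop (𝓝 (x, y + (l : 𝕜) • x)) := by
    refine hx.prodMk_nhds ?_
    have : ∀ n, A (g n) = u n + (l : 𝕜) • (g n : E) := fun n => by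
      rw [← hg n, subSMul_apply, sub_add_cancel]
    simpa only [this] using huy.add (hx.const_smul _)
  obtain ⟨z, hzx, hzy⟩ := (A.mem_graph_iff).mp
    (hA.isClosed.mem_of_tendsto hAg (Eventually.of_forall fun n => A.mem_graph (g n)))
  refine ⟨z, ?_⟩
  simp only [subSMul_apply, hzy, hzx, add_sub_cancel_right]

theorem orthogonal_range_subSMul (hA : IsSelfAdjoint A)
    (hlb : ∀ g : A.domain, σ₀ * ‖(g : E)‖ ^ 2 ≤ re ⟪A g, (g : E)⟫_𝕜) (hl : l < σ₀) :
    (LinearMap.range (A.subSMul l))ᗮ = ⊥ := by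
  refine (Submodule.eq_bot_iff _).mpr fun u hu => ?_
  have hgraph : (u, (l : 𝕜) • u) ∈ A.graph := by
    rw [← isSelfAdjoint_def.mp hA, adjoint_graph_eq_graph_adjoint hA.dense_domain,
      Submodule.mem_adjoint_iff]
    rintro a b hab
    obtain ⟨t, rfl, rfl⟩ := (A.mem_graph_iff).mp hab
    have := Submodule.inner_right_of_mem_orthogonal (LinearMap.mem_range_self (A.subSMul l) t) hu
    rw [subSMul_apply, inner_sub_left, inner_smul_left, conj_ofReal] at this
    rw [inner_smul_right]
    exact this
  obtain ⟨z, hzu, hzl⟩ := (A.mem_graph_iff).mp hgraph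
  have h := mul_norm_le_norm_subSMul (l := l) hlb z
  rw [subSMul_apply, hzl, hzu, sub_self, norm_zero] at h
  simpa using nonpos_of_mul_nonpos_right h (by linarith)

theorem surjective_subSMul (hA : IsSelfAdjoint A)
    (hlb : ∀ g : A.domain, σ₀ * ‖(g : E)‖ ^ 2 ≤ re ⟪A g, (g : E)⟫_𝕜) (hl : l < σ₀) :
    Function.Surjective (A.subSMul l) := by
  rw [← LinearMap.range_eq_top,
    ← (isClosed_range_subSMul hA hlb hl).submodule_topologicalClosure_eq,
    Submodule.topologicalClosure_eq_top_iff]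
  exact orthogonal_range_subSMul hA hlb hl

end LinearPMap

namespace ContinuousLinearMap

variable {𝕜 E : Type*} [RCLike 𝕜] [NormedAddCommGroup E] [InnerProductSpace 𝕜 E]

theorem abs_re_inner_apply_self_le (M : E →L[𝕜] E) (x : E) :
    |re ⟪M x, x⟫_𝕜| ≤ ‖M‖ * ‖x‖ ^ 2 :=
  calc |re ⟪M x, x⟫_𝕜| ≤ ‖M x‖ * ‖x‖ := (abs_re_le_norm _).trans (norm_inner_le_norm _ _)
    _ ≤ ‖M‖ * ‖x‖ * ‖x‖ := by gcongr; exact M.le_opNorm x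
    _ = ‖M‖ * ‖x‖ ^ 2 := by ring

end ContinuousLinearMap

section BoundaryTriple

variable {𝕜 H G : Type*} [RCLike 𝕜] [NormedAddCommGroup H] [InnerProductSpace 𝕜 H]
  [NormedAddCommGroup G] [InnerProductSpace 𝕜 G]

def GreenIdentity (T : H →ₗ.[𝕜] H) (Γ₀ Γ₁ : T.domain →ₗ[𝕜] G) : Prop :=
  ∀ f g : T.domain, ⟪T f, (g : H)⟫_𝕜 - ⟪(f : H), T g⟫_𝕜 = ⟪Γ₁ f, Γ₀ g⟫_𝕜 - ⟪Γ₀ f, Γ₁ g⟫_𝕜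

variable {T : H →ₗ.[𝕜] H} {Γ₀ Γ₁ : T.domain →ₗ[𝕜] G} {σ₀ l l' : ℝ}

theorem exists_defect_of_isSelfAdjoint [CompleteSpace H] {A₀ : H →ₗ.[𝕜] H}
    (hA₀sub : A₀.domain ≤ T.domain) (hA₀eq : ∀ f : A₀.domain, A₀ f = T ⟨f.1, hA₀sub f.2⟩)
    (hA₀dom : ∀ x (hx : x ∈ T.domain), x ∈ A₀.domain ↔ Γ₀ ⟨x, hx⟩ = 0)
    (hA₀sa : IsSelfAdjoint A₀)
    (hA₀lb : ∀ f : A₀.domain, σ₀ * ‖(f : H)‖ ^ 2 ≤ re ⟪A₀ f, (f : H)⟫_𝕜) (hl : l < σ₀)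
    (f : T.domain) : ∃ h : T.domain, T h = (l : 𝕜) • (h : H) ∧ Γ₀ h = Γ₀ f := by
  obtain ⟨g, hg⟩ := LinearPMap.surjective_subSMul hA₀sa hA₀lb hl (T f - (l : 𝕜) • (f : H))
  refine ⟨f - ⟨g, hA₀sub g.2⟩, ?_, ?_⟩
  · have hAg : A₀ g = T f - (l : 𝕜) • (f : H) + (l : 𝕜) • (g : H) := eq_add_of_sub_eq hg
    rw [LinearPMap.map_sub, ← hA₀eq, hAg, Submodule.coe_sub, smul_sub]
    abel
  · rw [map_sub, (hA₀dom g (hA₀sub g.2)).mp g.2, sub_zero]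

theorem le_re_inner_apply_sub_mul_norm_sq
    (hGreen : GreenIdentity T Γ₀ Γ₁)
    (hlb : ∀ u : T.domain, Γ₀ u = 0 → σ₀ * ‖(u : H)‖ ^ 2 ≤ re ⟪T u, (u : H)⟫_𝕜)
    (hl : l ≤ σ₀) {f h : T.domain} (hh : T h = (l : 𝕜) • (h : H)) (hΓ : Γ₀ h = Γ₀ f) :
    2 * re ⟪T f - (σ₀ : 𝕜) • (f : H), h⟫_𝕜 + re ⟪Γ₁ h, Γ₀ f⟫_𝕜 - re ⟪Γ₁ f, Γ₀ f⟫_𝕜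
      ≤ re ⟪T f, (f : H)⟫_𝕜 - σ₀ * ‖(f : H)‖ ^ 2 := by
  have hu := hlb (f - h) (by rw [map_sub, hΓ, sub_self])
  have hG := congrArg re (hGreen (f - h) h)
  rw [map_sub Γ₀, hΓ, sub_self, inner_zero_left, sub_zero, map_sub Γ₁] at hG
  simp only [Submodule.coe_sub, LinearPMap.map_sub, hh, inner_sub_left, inner_sub_right,
    inner_smul_left, inner_smul_right, _root_.map_sub, conj_ofReal, re_ofReal_mul,
    norm_sub_sq (𝕜 := 𝕜), inner_self_eq_norm_sq] at hu hG ⊢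
  rw [inner_re_symm (h : H) (f : H)] at *
  linarith [mul_nonneg (sub_nonneg.2 hl) (sq_nonneg ‖(h : H)‖)]

theorem sub_mul_norm_sq_le_re_inner_sub
    (hGreen : GreenIdentity T Γ₀ Γ₁)
    (hlb : ∀ u : T.domain, Γ₀ u = 0 → σ₀ * ‖(u : H)‖ ^ 2 ≤ re ⟪T u, (u : H)⟫_𝕜)
    (hl' : l' ≤ σ₀) {h h' : T.domain} (hh : T h = (l : 𝕜) • (h : H))
    (hh' : T h' = (l' : 𝕜) • (h' : H)) (hΓ : Γ₀ h = Γ₀ h') :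
    (l' - l) * ‖(h : H)‖ ^ 2 ≤ re ⟪Γ₁ h', Γ₀ h'⟫_𝕜 - re ⟪Γ₁ h, Γ₀ h⟫_𝕜 := by
  have hd := hlb (h' - h) (by rw [map_sub, hΓ, sub_self])
  have hG := congrArg re (hGreen h' h)
  rw [← hΓ] at hG ⊢
  simp only [Submodule.coe_sub, LinearPMap.map_sub, hh, hh', inner_sub_left, inner_sub_right,
    inner_smul_left, inner_smul_right, _root_.map_sub, conj_ofReal, re_ofReal_mul,
    inner_self_eq_norm_sq] at hd hG
  rw [inner_re_symm (h : H) (h' : H), inner_re_symm (Γ₀ h) (Γ₁ h)] at *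
  have hd_nonneg : 0 ≤ (σ₀ - l') * ‖(h' : H) - h‖ ^ 2 := by
    have := sub_nonneg.2 hl'
    positivity
  rw [norm_sub_sq (𝕜 := 𝕜)] at hd hd_nonneg
  linarith

theorem neg_sub_le_re_inner_apply_sub_mul_norm_sq
    (hGreen : GreenIdentity T Γ₀ Γ₁)
    (hlb : ∀ u : T.domain, Γ₀ u = 0 → σ₀ * ‖(u : H)‖ ^ 2 ≤ re ⟪T u, (u : H)⟫_𝕜)
    (hl : l + 1 ≤ σ₀) {f h h' : T.domain} (hf : re ⟪Γ₁ f, Γ₀ f⟫_𝕜 ≤ 0)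
    (hh : T h = (l : 𝕜) • (h : H)) (hh' : T h' = ((l + 1 : ℝ) : 𝕜) • (h' : H))
    (hΓ : Γ₀ h = Γ₀ f) (hΓ' : Γ₀ h' = Γ₀ f) {ε ε' : ℝ}
    (hε : |re ⟪Γ₁ h, Γ₀ f⟫_𝕜| ≤ ε) (hε' : |re ⟪Γ₁ h', Γ₀ f⟫_𝕜| ≤ ε') :
    -(2 * ‖T f - (σ₀ : 𝕜) • (f : H)‖ * √(ε' + ε)) - ε
      ≤ re ⟪T f, (f : H)⟫_𝕜 - σ₀ * ‖(f : H)‖ ^ 2 := by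
  have hform := le_re_inner_apply_sub_mul_norm_sq hGreen hlb (by linarith) hh hΓ
  have hdefect := sub_mul_norm_sq_le_re_inner_sub hGreen hlb hl hh hh' (hΓ.trans hΓ'.symm)
  rw [hΓ, hΓ', add_sub_cancel_left, one_mul] at hdefect
  have hnorm : ‖(h : H)‖ ≤ √(ε' + ε) :=
    Real.le_sqrt_of_sq_le (by
      linarith [le_abs_self (re ⟪Γ₁ h', Γ₀ f⟫_𝕜), neg_abs_le (re ⟪Γ₁ h, Γ₀ f⟫_𝕜)])
  have hinner : -(‖T f - (σ₀ : 𝕜) • (f : H)‖ * ‖(h : H)‖) ≤ re ⟪T f - (σ₀ : 𝕜) • (f : H), h⟫_𝕜 :=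
    neg_le_of_abs_le ((abs_re_le_norm _).trans (norm_inner_le_norm _ _))
  have := mul_le_mul_of_nonneg_left hnorm (norm_nonneg (T f - (σ₀ : 𝕜) • (f : H)))
  linarith [neg_abs_le (re ⟪Γ₁ h, Γ₀ f⟫_𝕜)]

end BoundaryTriple

theorem nonneg_of_forall_lt_neg_sqrt_le {ε : ℝ → ℝ} (hε : Tendsto ε atBot (𝓝 0)) {C X c : ℝ}
    (h : ∀ l < c, -(C * √(ε (l + 1) + ε l)) - ε l ≤ X) : 0 ≤ X := by
  have hlim := (((hε.comp (tendsto_atBot_add_const_right _ 1 tendsto_id)).add hε).sqrt.const_mul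
    C).neg.sub hε
  simp only [add_zero, Real.sqrt_zero, mul_zero, neg_zero, sub_zero] at hlim
  exact le_of_tendsto hlim ((eventually_lt_atBot c).mono h)

theorem stmt10_general
    {H G : Type*}
    [NormedAddCommGroup H] [InnerProductSpace ℂ H] [CompleteSpace H]
    [NormedAddCommGroup G] [InnerProductSpace ℂ G]
    (T : H →ₗ.[ℂ] H)
    (Γ₀ Γ₁ : T.domain →ₗ[ℂ] G)
    -- abstract Green identity
    (hGreen : ∀ f g : T.domain,
      ⟪T f, (g : H)⟫_ℂ - ⟪(f : H), T g⟫_ℂ = ⟪Γ₁ f, Γ₀ g⟫_ℂ - ⟪Γ₀ f, Γ₁ g⟫_ℂ)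
    -- A₀ = T ↾ ker Γ₀ is self-adjoint and bounded from below by σ₀
    (A₀ : H →ₗ.[ℂ] H) (hA₀sub : A₀.domain ≤ T.domain)
    (hA₀eq : ∀ f : A₀.domain, A₀ f = T ⟨f.1, hA₀sub f.2⟩)
    (hA₀dom : ∀ x (hx : x ∈ T.domain), x ∈ A₀.domain ↔ Γ₀ ⟨x, hx⟩ = 0)
    (hA₀sa : IsSelfAdjoint A₀)
    (σ₀ : ℝ)
    (hA₀lb : ∀ f : A₀.domain, σ₀ * ‖(f : H)‖ ^ 2 ≤ (⟪A₀ f, (f : H)⟫_ℂ).re)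
    -- Mbar λ is the (bounded) closure of the Weyl function M(λ) for λ < σ₀
    (Mbar : ℝ → (G →L[ℂ] G))
    (hWeyl : ∀ l : ℝ, l < σ₀ → ∀ f : T.domain,
      T f = (l : ℂ) • (f : H) → Mbar l (Γ₀ f) = Γ₁ f)
    -- (i) ‖Mbar λ‖ → 0 as λ → −∞
    (hdecay : Filter.Tendsto (fun l => ‖Mbar l‖) Filter.atBot (nhds 0))
    (B : G →ₗ.[ℂ] G)
    -- (iv) ran Γ₁ ⊆ dom B
    (hranΓ₁ : ∀ f : T.domain, Γ₁ f ∈ B.domain)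
    -- A = A_[B] = T ↾ {f ∈ dom T : Γ₀ f = B Γ₁ f}
    (A : H →ₗ.[ℂ] H) (hAsub : A.domain ≤ T.domain)
    (hAeq : ∀ f : A.domain, A f = T ⟨f.1, hAsub f.2⟩)
    (hAdom : ∀ x (hx : x ∈ T.domain),
      x ∈ A.domain ↔ Γ₀ ⟨x, hx⟩ = B ⟨Γ₁ ⟨x, hx⟩, hranΓ₁ ⟨x, hx⟩⟩)
    -- additionally B ≤ 0
    (hBneg : ∀ φ : B.domain, (⟪B φ, (φ : G)⟫_ℂ).re ≤ 0) :
    -- conclusion: min σ(A_[B]) ≥ min σ(A₀)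
    ∀ f : A.domain, σ₀ * ‖(f : H)‖ ^ 2 ≤ (⟪A f, (f : H)⟫_ℂ).re := by
  intro f
  set x : T.domain := ⟨f, hAsub f.2⟩
  have hlb (u : T.domain) (hu : Γ₀ u = 0) : σ₀ * ‖(u : H)‖ ^ 2 ≤ re ⟪T u, (u : H)⟫_ℂ := by
    have := hA₀lb ⟨u, (hA₀dom u u.2).mpr hu⟩
    rwa [hA₀eq] at this
  have hΓx : re ⟪Γ₁ x, Γ₀ x⟫_ℂ ≤ 0 := by
    rw [(hAdom f (hAsub f.2)).mp f.2, inner_re_symm]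
    exact hBneg _
  have hWeyl_bound (l : ℝ) (hl : l < σ₀) (h : T.domain) (hh : T h = (l : ℂ) • (h : H))
      (hΓ : Γ₀ h = Γ₀ x) : |re ⟪Γ₁ h, Γ₀ x⟫_ℂ| ≤ ‖Mbar l‖ * ‖Γ₀ x‖ ^ 2 := by
    rw [← hWeyl l hl h hh, hΓ]
    exact (Mbar l).abs_re_inner_apply_self_le (Γ₀ x)
  have hε : Tendsto (fun l => ‖Mbar l‖ * ‖Γ₀ x‖ ^ 2) atBot (𝓝 0) := by
    simpa using hdecay.mul_const (‖Γ₀ x‖ ^ 2)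
  rw [hAeq f, ← sub_nonneg]
  refine nonneg_of_forall_lt_neg_sqrt_le hε (C := 2 * ‖T x - (σ₀ : ℂ) • (x : H)‖) (c := σ₀ - 1)
    fun l hl => ?_
  obtain ⟨h, hh, hΓ⟩ :=
    exists_defect_of_isSelfAdjoint (l := l) hA₀sub hA₀eq hA₀dom hA₀sa hA₀lb (by linarith) x
  obtain ⟨h', hh', hΓ'⟩ :=
    exists_defect_of_isSelfAdjoint (l := l + 1) hA₀sub hA₀eq hA₀dom hA₀sa hA₀lb (by linarith) x
  exact neg_sub_le_re_inner_apply_sub_mul_norm_sq hGreen hlb (by linarith) hΓx hh hh' hΓ hΓ'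
    (hWeyl_bound l (by linarith) h hh hΓ) (hWeyl_bound (l + 1) (by linarith) h' hh' hΓ')

/-- Under the assumptions of the semiboundedness theorem (quasi boundary
triple, `A₀` self-adjoint bounded below by `σ₀`, `‖Mbar λ‖ → 0` as `λ → −∞`, `B`
self-adjoint bounded above with the range/domain conditions), if additionally `B ≤ 0`,
then `min σ(A_[B]) ≥ min σ(A₀)`: every lower bound `σ₀` of `A₀` is a lower bound
of `A_[B]`. -/
theorem stmt10
    {H G : Type*}
    [NormedAddCommGroup H] [InnerProductSpace ℂ H] [CompleteSpace H]
    [NormedAddCommGroup G] [InnerProductSpace ℂ G] [CompleteSpace G]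
    (T : H →ₗ.[ℂ] H) (hTdense : Dense (T.domain : Set H))
    (Γ₀ Γ₁ : T.domain →ₗ[ℂ] G)
    -- abstract Green identity
    (hGreen : ∀ f g : T.domain,
      ⟪T f, (g : H)⟫_ℂ - ⟪(f : H), T g⟫_ℂ = ⟪Γ₁ f, Γ₀ g⟫_ℂ - ⟪Γ₀ f, Γ₁ g⟫_ℂ)
    -- (Γ₀, Γ₁) has dense range
    (hdense : Dense (Set.range fun f : T.domain => (Γ₀ f, Γ₁ f)))
    -- A₀ = T ↾ ker Γ₀ is self-adjoint and bounded from below by σ₀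
    (A₀ : H →ₗ.[ℂ] H) (hA₀sub : A₀.domain ≤ T.domain)
    (hA₀eq : ∀ f : A₀.domain, A₀ f = T ⟨f.1, hA₀sub f.2⟩)
    (hA₀dom : ∀ x (hx : x ∈ T.domain), x ∈ A₀.domain ↔ Γ₀ ⟨x, hx⟩ = 0)
    (hA₀sa : IsSelfAdjoint A₀)
    (σ₀ : ℝ)
    (hA₀lb : ∀ f : A₀.domain, σ₀ * ‖(f : H)‖ ^ 2 ≤ (⟪A₀ f, (f : H)⟫_ℂ).re)
    -- Mbar λ is the (bounded) closure of the Weyl function M(λ) for λ < σ₀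
    (Mbar : ℝ → (G →L[ℂ] G))
    (hWeyl : ∀ l : ℝ, l < σ₀ → ∀ f : T.domain,
      T f = (l : ℂ) • (f : H) → Mbar l (Γ₀ f) = Γ₁ f)
    -- (i) ‖Mbar λ‖ → 0 as λ → −∞
    (hdecay : Filter.Tendsto (fun l => ‖Mbar l‖) Filter.atBot (nhds 0))
    -- R λ = (Mbar λ)^{1/2}, the non-negative square root
    (R : ℝ → (G →L[ℂ] G))
    (hRsa : ∀ l : ℝ, l < σ₀ → IsSelfAdjoint (R l))
    (hRnn : ∀ l : ℝ, l < σ₀ → ∀ x : G, 0 ≤ (⟪R l x, x⟫_ℂ).re)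
    (hRR : ∀ l : ℝ, l < σ₀ → R l ∘L R l = Mbar l)
    -- B self-adjoint and bounded from above
    (B : G →ₗ.[ℂ] G) (hBsa : IsSelfAdjoint B)
    (hBub : ∃ c : ℝ, ∀ φ : B.domain, (⟪B φ, (φ : G)⟫_ℂ).re ≤ c * ‖(φ : G)‖ ^ 2)
    -- (ii) ran (Mbar λ)^{1/2} ⊆ dom B for all λ < σ₀
    (hranR : ∀ l : ℝ, l < σ₀ → ∀ x : G, R l x ∈ B.domain)
    -- (iii) B (ran Mbar λ) ⊆ ran Γ₀ for all λ < σ₀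
    (hBM : ∀ (l : ℝ), l < σ₀ → ∀ (x : G) (h : Mbar l x ∈ B.domain),
      B ⟨Mbar l x, h⟩ ∈ Set.range Γ₀)
    -- (iv) ran Γ₁ ⊆ dom B
    (hranΓ₁ : ∀ f : T.domain, Γ₁ f ∈ B.domain)
    -- (v) B (ran Γ₁) ⊆ ran Γ₀
    (hBΓ₁ : ∀ f : T.domain, B ⟨Γ₁ f, hranΓ₁ f⟩ ∈ Set.range Γ₀)
    -- A = A_[B] = T ↾ {f ∈ dom T : Γ₀ f = B Γ₁ f}
    (A : H →ₗ.[ℂ] H) (hAsub : A.domain ≤ T.domain)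
    (hAeq : ∀ f : A.domain, A f = T ⟨f.1, hAsub f.2⟩)
    (hAdom : ∀ x (hx : x ∈ T.domain),
      x ∈ A.domain ↔ Γ₀ ⟨x, hx⟩ = B ⟨Γ₁ ⟨x, hx⟩, hranΓ₁ ⟨x, hx⟩⟩)
    -- additionally B ≤ 0
    (hBneg : ∀ φ : B.domain, (⟪B φ, (φ : G)⟫_ℂ).re ≤ 0) :
    -- conclusion: min σ(A_[B]) ≥ min σ(A₀)
    ∀ f : A.domain, σ₀ * ‖(f : H)‖ ^ 2 ≤ (⟪A f, (f : H)⟫_ℂ).re :=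
  stmt10_general T Γ₀ Γ₁ hGreen A₀ hA₀sub hA₀eq hA₀dom hA₀sa σ₀ hA₀lb Mbar hWeyl hdecay B hranΓ₁ A
    hAsub hAeq hAdom hBneg
end

section
/- Let Ω ⊂ ℝⁿ be a bounded Lipschitz domain where the trace estimate holds with β(ε) = c/ε for small ε > 0 and some c > 0. Then, in the setting of the preceding form lower bound, min σ(A_[B]) ≥ ess inf a − (c/E)‖B₊‖² for ‖B₊‖ sufficiently large, where A_[B] is the self-adjoint operator associated with the form 𝔞_B. -/
/-! The boundary term is at most `‖B₊‖ ‖τ f‖²`. Applying the trace estimate with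
`ε = E / ‖B₊‖` turns its gradient part into exactly `E ‖∇f‖²`, which ellipticity absorbs,
and leaves `(c / E) ‖B₊‖² ‖f‖²` to be subtracted from `a₀ ‖f‖²`. -/

open scoped InnerProductSpace

theorem ContinuousLinearMap.re_inner_apply_self_le {𝕜 E : Type*} [RCLike 𝕜]
    [SeminormedAddCommGroup E] [InnerProductSpace 𝕜 E] (T : E →L[𝕜] E) (x : E) :
    RCLike.re ⟪T x, x⟫_𝕜 ≤ ‖T‖ * ‖x‖ ^ 2 :=
  calc RCLike.re ⟪T x, x⟫_𝕜 ≤ ‖T x‖ * ‖x‖ := re_inner_le_norm _ _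
    _ ≤ ‖T‖ * ‖x‖ * ‖x‖ := by gcongr; exact T.le_opNorm x
    _ = ‖T‖ * ‖x‖ ^ 2 := by ring

theorem mul_le_of_le_div_mul_add_div_div_mul {t g n b E c : ℝ} (hb : 0 < b) (hE : 0 < E)
    (h : t ≤ E / b * g + c / (E / b) * n) : b * t ≤ E * g + c / E * b ^ 2 * n :=
  calc b * t ≤ b * (E / b * g + c / (E / b) * n) := by gcongr
    _ = E * g + c / E * b ^ 2 * n := by field_simp

theorem stmt18_general
    {V W H : Type*} [NormedAddCommGroup W] [InnerProductSpace ℂ W]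
    [NormedAddCommGroup H] [InnerProductSpace ℂ H]
    (gradSq normSq a1 af : V → ℝ) (τ : V → W)
    (E a₀ ε₀ c : ℝ) (hE : 0 < E)
    (hell : ∀ f, E * gradSq f ≤ a1 f)
    (ha : ∀ f, a₀ * normSq f ≤ af f)
    -- trace estimate with β(ε) = c/ε
    (htrace : ∀ ε : ℝ, 0 < ε → ε ≤ ε₀ →
      ∀ f, ‖τ f‖ ^ 2 ≤ ε * gradSq f + (c / ε) * normSq f)
    (B Bp : W →L[ℂ] W)
    (hBle : ∀ w : W, (⟪B w, w⟫_ℂ).re ≤ (⟪Bp w, w⟫_ℂ).re)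
    (hBp0 : Bp ≠ 0)
    -- ‖B₊‖ sufficiently large: ε = E/‖B₊‖ admissible
    (hadm : E / ‖Bp‖ ≤ ε₀)
    -- A_[B] : the self-adjoint operator associated with the form 𝔞_B
    (A : H →ₗ.[ℂ] H)
    (d : A.domain → V)
    (hd1 : ∀ f : A.domain, (⟪A f, (f : H)⟫_ℂ).re
      = a1 (d f) + af (d f) - (⟪B (τ (d f)), τ (d f)⟫_ℂ).re)
    (hd2 : ∀ f : A.domain, normSq (d f) = ‖(f : H)‖ ^ 2) :
    ∀ f : A.domain,
      (a₀ - (c / E) * ‖Bp‖ ^ 2) * ‖(f : H)‖ ^ 2 ≤ (⟪A f, (f : H)⟫_ℂ).re := by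
  intro f
  have hBp : 0 < ‖Bp‖ := norm_pos_iff.mpr hBp0
  have hboundary : (⟪B (τ (d f)), τ (d f)⟫_ℂ).re
      ≤ E * gradSq (d f) + c / E * ‖Bp‖ ^ 2 * normSq (d f) :=
    calc (⟪B (τ (d f)), τ (d f)⟫_ℂ).re ≤ (⟪Bp (τ (d f)), τ (d f)⟫_ℂ).re := hBle _
      _ ≤ ‖Bp‖ * ‖τ (d f)‖ ^ 2 := Bp.re_inner_apply_self_le _
      _ ≤ _ := mul_le_of_le_div_mul_add_div_div_mul hBp hE
                (htrace _ (div_pos hE hBp) hadm _)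
  rw [hd1, ← hd2]
  linarith [hell (d f), ha (d f)]

/-- On a bounded Lipschitz domain the trace estimate holds with
`β(ε) = c/ε`; hence, in the setting of the Robin-form lower bound, the self-adjoint
operator `A_[B]` associated with the form `𝔞_B` satisfies
`min σ(A_[B]) ≥ ess inf a − (c/E) ‖B₊‖²` (for `‖B₊‖` sufficiently large, i.e. when
`ε = E/‖B₊‖` is admissible).  By the variational principle this is expressed as the
corresponding lower bound of the numerical range of `A_[B]`. -/
theorem stmt18
    {V W H : Type*} [NormedAddCommGroup W] [InnerProductSpace ℂ W] [CompleteSpace W]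
    [NormedAddCommGroup H] [InnerProductSpace ℂ H] [CompleteSpace H]
    (gradSq normSq a1 af : V → ℝ) (τ : V → W)
    (E a₀ ε₀ c : ℝ) (hE : 0 < E) (hc : 0 < c) (hε₀ : 0 < ε₀)
    (hg : ∀ f, 0 ≤ gradSq f) (hn : ∀ f, 0 ≤ normSq f)
    (hell : ∀ f, E * gradSq f ≤ a1 f)
    (ha : ∀ f, a₀ * normSq f ≤ af f)
    -- trace estimate with β(ε) = c/ε
    (htrace : ∀ ε : ℝ, 0 < ε → ε ≤ ε₀ →
      ∀ f, ‖τ f‖ ^ 2 ≤ ε * gradSq f + (c / ε) * normSq f)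
    (B Bp : W →L[ℂ] W) (hBsa : IsSelfAdjoint B) (hBpsa : IsSelfAdjoint Bp)
    (hBp_nn : ∀ w : W, 0 ≤ (⟪Bp w, w⟫_ℂ).re)
    (hBle : ∀ w : W, (⟪B w, w⟫_ℂ).re ≤ (⟪Bp w, w⟫_ℂ).re)
    (hBp0 : Bp ≠ 0)
    -- ‖B₊‖ sufficiently large: ε = E/‖B₊‖ admissible
    (hadm : E / ‖Bp‖ ≤ ε₀)
    -- A_[B] : the self-adjoint operator associated with the form 𝔞_B
    (A : H →ₗ.[ℂ] H) (hAsa : IsSelfAdjoint A)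
    (d : A.domain → V)
    (hd1 : ∀ f : A.domain, (⟪A f, (f : H)⟫_ℂ).re
      = a1 (d f) + af (d f) - (⟪B (τ (d f)), τ (d f)⟫_ℂ).re)
    (hd2 : ∀ f : A.domain, normSq (d f) = ‖(f : H)‖ ^ 2) :
    ∀ f : A.domain,
      (a₀ - (c / E) * ‖Bp‖ ^ 2) * ‖(f : H)‖ ^ 2 ≤ (⟪A f, (f : H)⟫_ℂ).re :=
  stmt18_general gradSq normSq a1 af τ E a₀ ε₀ c hE hell ha htrace B Bp hBle hBp0 hadm A d hd1 hd2
end
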